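/- arXiv:2502.02393 — 5 statements merged into one kernel-verified Lean document; each statement's English description precedes it below -/
import Mathlib

section
/- For all L, H ∈ ℕ, every finite alphabet Σ, and every C ∈ (0,1), there exist c, K ∈ ℕ (depending only on L, H, |Σ| and C) such that: for every UHAT transformer T over Σ with L layers and H heads per layer and every input length N > K, there is a map ρ : {1,…,N} → Σ ∪ {*} with |{i : ρ(i) = *}| ≥ C·N such that for every position i ∈ {1,…,N} and layer l ∈ {1,…,L} there is a set S ⊆ {1,…,N} with |S| ≤ c such that, on inputs x ∈ Σ^N consistent with ρ, the activation y_i^{(l)} of T is a function only of the coordinates (x_j)_{j ∈ S}. -/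
open Matrix Filter

/-- A unique-hard-attention (UHAT) transformer over vocabulary type `V`. -/
structure UHAT (V : Type*) where
  /-- width -/
  d : ℕ
  /-- maximal context size -/
  nmax : ℕ
  /-- number of layers -/
  L : ℕ
  /-- number of heads per layer -/
  H : ℕ
  /-- the (finite) vocabulary -/
  vocab : Finset V
  /-- token embeddings -/
  embed : V → Fin d → ℝ
  /-- positional encodings -/
  pos : ℕ → Fin d → ℝ
  /-- key matrices (layer, head) -/
  Kmat : ℕ → ℕ → Matrix (Fin d) (Fin d) ℝ
  /-- query matrices (layer, head) -/
  Qmat : ℕ → ℕ → Matrix (Fin d) (Fin d) ℝ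
  /-- value matrices (layer, head) -/
  Vmat : ℕ → ℕ → Matrix (Fin d) (Fin d) ℝ
  /-- (arbitrary) MLP maps, one for each layer -/
  mlp : ℕ → (Fin d → ℝ) → Fin d → ℝ
  /-- output matrix, one row per vocabulary item -/
  outm : V → Fin d → ℝ

open Classical in
/-- The smallest `j ≤ i` maximizing `f j` (unique hard attention with leftmost
tie-breaking and causal masking). -/
noncomputable def argmaxLeft {n : ℕ} (i : Fin n) (f : Fin n → ℝ) : Fin n :=
  ((Finset.Iic i).filter fun j => ∀ j' ∈ Finset.Iic i, f j' ≤ f j).min'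
    (by
      obtain ⟨b, hb, hmax⟩ :=
        (Finset.Iic i).exists_max_image f ⟨i, Finset.mem_Iic.mpr le_rfl⟩
      exact ⟨b, Finset.mem_filter.mpr ⟨hb, hmax⟩⟩)

/-- Activations `y_i^{(k)}` of a UHAT transformer on the input string `w`. -/
noncomputable def UHAT.act {V : Type*} (T : UHAT V) {n : ℕ} (w : Fin n → V) :
    ℕ → Fin n → Fin T.d → ℝ
  | 0, i => fun t => T.embed (w i) t + T.pos i.val t
  | k + 1, i =>
      T.mlp k (T.act w k i +
        ∑ h ∈ Finset.range T.H,
          (T.Vmat k h).mulVec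
            (T.act w k (argmaxLeft i fun j =>
              (T.Kmat k h).mulVec (T.act w k j) ⬝ᵥ (T.Qmat k h).mulVec (T.act w k i))))

/-- The output of the transformer at (0-indexed) position `i` of the string `w`:
a score for each vocabulary item. -/
noncomputable def UHAT.output {V : Type*} (T : UHAT V) (w : List V) (i : ℕ) : V → ℝ :=
  if h : i < w.length then fun v => T.outm v ⬝ᵥ T.act w.get T.L ⟨i, h⟩ else 0

open Classical in
/-- One-hot vector over the vocabulary. -/
noncomputable def oneHot {V : Type*} (v : V) : V → ℝ := fun u => if u = v then 1 else 0

/-- `T` computes the chain of thought `y` on input `w`: all symbols of `w ++ y` are in the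
vocabulary, the string fits into the context window, and for each `i = 1, …, |y|`, the
output at (1-indexed) position `|w| + i - 1` is the one-hot vector of `yᵢ`. -/
def UHAT.Computes {V : Type*} (T : UHAT V) (w y : List V) : Prop :=
  (∀ v ∈ w ++ y, v ∈ T.vocab) ∧ (w ++ y).length ≤ T.nmax ∧
    ∀ i : Fin y.length, T.output (w ++ y) (w.length + i.val - 1) = oneHot (y.get i)

/-- The chain of thought `g` (with input symbols included into the CoT alphabet via `ι`)
is expressible in UHAT: there are uniform bounds `L`, `H` on layers and heads such that for
every total length `n` some UHAT transformer computes `g` on all inputs of total length `n`. -/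
def ExpressibleUHAT {S V : Type*} (ι : S → V) (g : List S → List V) : Prop :=
  ∃ L H : ℕ, ∀ n : ℕ, ∃ T : UHAT V, T.L ≤ L ∧ T.H ≤ H ∧
    ∀ x : List S, (x.map ι ++ g x).length = n → T.Computes (x.map ι) (g x)

/-- Worst-case CoT length over inputs of length `N`. -/
noncomputable def maxCoTLen {S V : Type*} [Fintype S] (g : List S → List V) (N : ℕ) : ℕ :=
  Finset.univ.sup fun x : Fin N → S => (g (List.ofFn x)).length

/-- `x` is consistent with the restriction `ρ` (`none` plays the role of `*`). -/
def ConsistentWith {S : Type*} {N : ℕ} (ρ : Fin N → Option S) (x : Fin N → S) : Prop :=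
  ∀ i : Fin N, ∀ s : S, ρ i = some s → x i = s

/-- Parity of a bit string: `true` iff the number of `1`s is odd. -/
def parity (x : List Bool) : Bool := decide (x.count true % 2 = 1)

/-!
Induction on the layers. Suppose every activation of layer `k` depends on a set `Sd j` of at most
`a` letters. A head at position `i` compares the scores of the positions `j ≤ i`, and the score of
`j` depends only on `Sd i ∪ Sd j`. Once the letters on `Sd i` are given (a query), it suffices that
the attended position is either one of boundedly many exceptional positions or has its dependency
set fully fixed by the restriction. Rank the positions by their largest score over the inputs of
the query. Fix the dependency set of one of the top `k` unfixed positions to the letters of the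
input where its score is largest. Then its score becomes constant, and no unfixed position outside
the top `k` can beat it. A pigeonhole argument over (candidate, letters on its dependency set)
shows that one such fixing serves many queries at once. So all `N H |S|^a` queries of a layer are
served by fixing at most `N / B` letters, and the dependency sets grow to a size depending only on
`a`, `H`, `|S|` and `B`.
-/

open Finset

/-- Leftmost tie-breaking: among equal scores, the smaller position gets the larger key. -/
def attnKey {n : ℕ} (f : Fin n → ℝ) (j : Fin n) : ℝ ×ₗ (Fin n)ᵒᵈ :=
  toLex (f j, OrderDual.toDual j)

theorem attnKey_injective {n : ℕ} (f : Fin n → ℝ) : Function.Injective (attnKey f) :=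
  fun _ _ h => OrderDual.toDual.injective (congrArg (fun p => (ofLex p).2) h)

theorem attnKey_le_attnKey {n : ℕ} {f g : Fin n → ℝ} {j : Fin n} (h : f j ≤ g j) :
    attnKey f j ≤ attnKey g j :=
  Prod.Lex.toLex_le_toLex'.mpr ⟨h, fun _ => le_rfl⟩

section ArgmaxLeft

variable {n : ℕ} (i : Fin n) (f : Fin n → ℝ)

theorem argmaxLeft_le_self_and_forall_le :
    argmaxLeft i f ≤ i ∧ ∀ j ≤ i, f j ≤ f (argmaxLeft i f) := by
  rw [argmaxLeft]
  generalize_proofs hne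
  have h := mem_filter.mp (min'_mem _ hne)
  exact ⟨mem_Iic.mp h.1, fun j hj => h.2 j (mem_Iic.mpr hj)⟩

theorem argmaxLeft_le_self : argmaxLeft i f ≤ i :=
  (argmaxLeft_le_self_and_forall_le i f).1

theorem argmaxLeft_le_of_forall_le {j : Fin n} (hj : j ≤ i) (hmax : ∀ j' ≤ i, f j' ≤ f j) :
    argmaxLeft i f ≤ j := by
  rw [argmaxLeft]
  exact min'_le _ j (mem_filter.mpr ⟨mem_Iic.mpr hj, fun j' hj' => hmax j' (mem_Iic.mp hj')⟩)

theorem attnKey_lt_attnKey_argmaxLeft {j : Fin n} (hj : j ≤ i) (hne : j ≠ argmaxLeft i f) :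
    attnKey f j < attnKey f (argmaxLeft i f) := by
  have hmax := (argmaxLeft_le_self_and_forall_le i f).2
  rcases (hmax j hj).lt_or_eq with hlt | heq
  · exact Prod.Lex.toLex_lt_toLex.mpr (Or.inl hlt)
  · have hle := argmaxLeft_le_of_forall_le i f hj fun j' hj' => heq ▸ hmax j' hj'
    exact Prod.Lex.toLex_lt_toLex.mpr (Or.inr ⟨heq, OrderDual.toDual_lt_toDual.mpr
      (lt_of_le_of_ne hle (Ne.symm hne))⟩)

variable {i f}

theorem argmaxLeft_mem_of_attnKey_lt {p : Fin n → Prop} {j₀ : Fin n} (hj₀ : j₀ ≤ i)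
    (h : ∀ j ≤ i, ¬ p j → attnKey f j < attnKey f j₀) : p (argmaxLeft i f) := by
  by_contra hp
  have hlt := h _ (argmaxLeft_le_self i f) hp
  rcases eq_or_ne j₀ (argmaxLeft i f) with rfl | hne
  · exact hlt.false
  · exact (attnKey_lt_attnKey_argmaxLeft i f hj₀ hne).asymm hlt

theorem argmaxLeft_eq_of_eqOn {p : Fin n → Prop} {g : Fin n → ℝ} (hf : p (argmaxLeft i f))
    (hg : p (argmaxLeft i g)) (hfg : ∀ j, p j → f j = g j) :
    argmaxLeft i f = argmaxLeft i g := by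
  by_contra hne
  have key_eq : ∀ j, p j → attnKey f j = attnKey g j := fun j hj => by simp [attnKey, hfg j hj]
  have h₁ := attnKey_lt_attnKey_argmaxLeft i f (argmaxLeft_le_self i g) (Ne.symm hne)
  have h₂ := attnKey_lt_attnKey_argmaxLeft i g (argmaxLeft_le_self i f) hne
  rw [key_eq _ hf, key_eq _ hg] at h₁
  exact h₁.asymm h₂

end ArgmaxLeft

theorem Finset.exists_subset_card_eq_forall_lt {α β : Type*} [LinearOrder β] {key : α → β}
    (hkey : Function.Injective key) (F : Finset α) {k : ℕ} (hk : k ≤ #F) :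
    ∃ D ⊆ F, #D = k ∧ ∀ d ∈ D, ∀ j ∈ F, j ∉ D → key j < key d := by
  classical
  induction k generalizing F with
  | zero => exact ⟨∅, empty_subset F, card_empty, by simp⟩
  | succ k ih =>
    obtain ⟨m, hmF, hm⟩ := F.exists_max_image key (card_pos.mp (by omega))
    obtain ⟨D, hDF, hDk, hD⟩ := ih (F.erase m) (by rw [card_erase_of_mem hmF]; omega)
    have hmD : m ∉ D := fun h => by simpa using hDF h
    refine ⟨insert m D, insert_subset hmF (hDF.trans (erase_subset m F)),
      by rw [card_insert_of_notMem hmD, hDk], ?_⟩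
    intro d hd j hj hjD
    have hjm : j ≠ m := fun h => hjD (h ▸ mem_insert_self m D)
    rcases mem_insert.mp hd with rfl | hd
    · exact (hm j hj).lt_of_ne (hkey.ne hjm)
    · exact hD d hd j (mem_erase.mpr ⟨hjm, hj⟩) (fun h => hjD (mem_insert_of_mem h))

namespace Restriction

variable {S : Type*} {N : ℕ}

def Extends (ρ ρ' : Fin N → Option S) : Prop := ∀ u s, ρ u = some s → ρ' u = some s

theorem Extends.refl (ρ : Fin N → Option S) : Extends ρ ρ := fun _ _ h => h

theorem Extends.trans {ρ₁ ρ₂ ρ₃ : Fin N → Option S} (h₁₂ : Extends ρ₁ ρ₂)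
    (h₂₃ : Extends ρ₂ ρ₃) : Extends ρ₁ ρ₃ :=
  fun u s h => h₂₃ u s (h₁₂ u s h)

theorem Extends.consistentWith {ρ ρ' : Fin N → Option S} (h : Extends ρ ρ') {x : Fin N → S}
    (hx : ConsistentWith ρ' x) : ConsistentWith ρ x :=
  fun u s hu => hx u s (h u s hu)

theorem Extends.isSome {ρ ρ' : Fin N → Option S} (h : Extends ρ ρ') {u : Fin N}
    (hu : (ρ u).isSome) : (ρ' u).isSome := by
  obtain ⟨s, hs⟩ := Option.isSome_iff_exists.mp hu
  simp [h u s hs]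

theorem _root_.ConsistentWith.eq_of_isSome {ρ : Fin N → Option S} {x y : Fin N → S}
    (hx : ConsistentWith ρ x) (hy : ConsistentWith ρ y) {u : Fin N} (hu : (ρ u).isSome) :
    x u = y u := by
  obtain ⟨s, hs⟩ := Option.isSome_iff_exists.mp hu
  rw [hx u s hs, hy u s hs]

def numFixed (ρ : Fin N → Option S) : ℕ := #{u | (ρ u).isSome}

theorem card_isNone_add_numFixed (ρ : Fin N → Option S) :
    #{u | (ρ u).isNone} + numFixed ρ = N := by
  rw [numFixed, add_comm]
  simpa [Option.isNone_iff_eq_none, Option.isSome_iff_ne_none] using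
    card_filter_add_card_filter_not (s := univ) (fun u => (ρ u).isSome)

def fixOn (ρ : Fin N → Option S) (A : Finset (Fin N)) (y : Fin N → S) : Fin N → Option S :=
  fun u => if u ∈ A then some (y u) else ρ u

theorem extends_fixOn {ρ : Fin N → Option S} {y : Fin N → S} (hy : ConsistentWith ρ y)
    (A : Finset (Fin N)) : Extends ρ (fixOn ρ A y) := by
  intro u s hu
  by_cases huA : u ∈ A <;> simp [fixOn, huA, hu, hy u s hu]

theorem _root_.ConsistentWith.eq_of_fixOn {ρ : Fin N → Option S} {A : Finset (Fin N)}
    {x y : Fin N → S} (hx : ConsistentWith (fixOn ρ A y) x) {u : Fin N} (hu : u ∈ A) : x u = y u :=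
  hx u (y u) (by simp [fixOn, hu])

theorem numFixed_fixOn_le (ρ : Fin N → Option S) (A : Finset (Fin N)) (y : Fin N → S) :
    numFixed (fixOn ρ A y) ≤ numFixed ρ + #A := by
  refine (card_le_card fun u hu => ?_).trans (card_union_le _ A)
  rw [mem_filter] at hu
  by_cases huA : u ∈ A <;> simp_all [fixOn]

def DependsOnUnder {β : Type*} (ρ : Fin N → Option S) (f : (Fin N → S) → β)
    (A : Finset (Fin N)) : Prop :=
  ∀ x y, ConsistentWith ρ x → ConsistentWith ρ y → (∀ u ∈ A, x u = y u) → f x = f y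

theorem DependsOnUnder.mono {β : Type*} {ρ ρ' : Fin N → Option S} {f : (Fin N → S) → β}
    {A B : Finset (Fin N)} (hf : DependsOnUnder ρ f A) (hρ : Extends ρ ρ') (hAB : A ⊆ B) :
    DependsOnUnder ρ' f B :=
  fun x y hx hy hxy =>
    hf x y (hρ.consistentWith hx) (hρ.consistentWith hy) fun u hu => hxy u (hAB hu)

theorem DependsOnUnder.map {β γ : Type*} {ρ : Fin N → Option S} {f : (Fin N → S) → β}
    {A : Finset (Fin N)} (hf : DependsOnUnder ρ f A) (F : β → γ) :
    DependsOnUnder ρ (fun x => F (f x)) A :=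
  fun x y hx hy hxy => congrArg F (hf x y hx hy hxy)

theorem DependsOnUnder.map₂ {β γ δ : Type*} {ρ : Fin N → Option S} {f : (Fin N → S) → β}
    {g : (Fin N → S) → γ} {A B : Finset (Fin N)} (hf : DependsOnUnder ρ f A)
    (hg : DependsOnUnder ρ g B) (F : β → γ → δ) :
    DependsOnUnder ρ (fun x => F (f x) (g x)) (A ∪ B) := by
  intro x y hx hy hxy
  show F (f x) (g x) = F (f y) (g y)
  rw [hf x y hx hy fun u hu => hxy u (mem_union_left B hu),
    hg x y hx hy fun u hu => hxy u (mem_union_right A hu)]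

theorem mul_le_card_isNone {C : ℝ} (hC : C < 1) {ρ : Fin N → Option S}
    (h : ⌈(1 - C)⁻¹⌉₊ * numFixed ρ ≤ N) : C * N ≤ #{u | (ρ u).isNone} := by
  have hstars : (#{u | (ρ u).isNone} : ℝ) = N - numFixed ρ := by
    have := card_isNone_add_numFixed ρ
    rw [eq_sub_iff_add_eq]
    exact_mod_cast this
  have hD : 1 ≤ (1 - C) * ⌈(1 - C)⁻¹⌉₊ := by
    rw [← inv_le_iff_one_le_mul₀' (by linarith)]
    exact Nat.le_ceil _
  have h' : (⌈(1 - C)⁻¹⌉₊ * numFixed ρ : ℝ) ≤ N := by exact_mod_cast h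
  rw [hstars]
  nlinarith [(numFixed ρ).cast_nonneg (α := ℝ)]

theorem exists_extends_of_forall_exists_step (bad : (Fin N → Option S) → ℕ)
    {ρ₀ : Fin N → Option S} {a W U : ℕ}
    (step : ∀ ρ, Extends ρ₀ ρ → U < bad ρ →
      ∃ ρ', Extends ρ ρ' ∧ numFixed ρ' ≤ numFixed ρ + a ∧ bad ρ' + W ≤ bad ρ)
    (hW : 0 < W) :
    ∃ ρ, Extends ρ₀ ρ ∧ W * numFixed ρ ≤ W * numFixed ρ₀ + a * bad ρ₀ ∧ bad ρ ≤ U := by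
  suffices h : ∀ n ρ, Extends ρ₀ ρ → bad ρ = n → ∃ ρ', Extends ρ ρ' ∧
      W * numFixed ρ' ≤ W * numFixed ρ + a * bad ρ ∧ bad ρ' ≤ U from
    h _ ρ₀ (.refl ρ₀) rfl
  intro n
  induction n using Nat.strong_induction_on with
  | _ n ih =>
  rintro ρ hρ rfl
  by_cases hU : bad ρ ≤ U
  · exact ⟨ρ, .refl ρ, Nat.le_add_right _ _, hU⟩
  obtain ⟨ρ₁, h₁, hcost₁, hbad₁⟩ := step ρ hρ (by omega)
  obtain ⟨ρ₂, h₂, hcost₂, hU₂⟩ := ih _ (by omega) ρ₁ (hρ.trans h₁) rfl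
  refine ⟨ρ₂, h₁.trans h₂, ?_, hU₂⟩
  have := Nat.mul_le_mul_left W hcost₁
  have := Nat.mul_le_mul_left a hbad₁
  nlinarith

section Patterns

variable [Nonempty S]

noncomputable def mask (A : Finset (Fin N)) (x : Fin N → S) : Fin N → S :=
  fun u => if u ∈ A then x u else Classical.arbitrary S

theorem mask_apply_of_mem {A : Finset (Fin N)} (x : Fin N → S) {u : Fin N} (hu : u ∈ A) :
    mask A x u = x u :=
  if_pos hu

variable [Fintype S]

/-- Patterns on `A`, stored as inputs that carry a default letter outside `A`. -/
noncomputable def patterns (A : Finset (Fin N)) : Finset (Fin N → S) :=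
  Fintype.piFinset fun u => if u ∈ A then univ else {Classical.arbitrary S}

theorem mask_mem_patterns (A : Finset (Fin N)) (x : Fin N → S) : mask A x ∈ patterns A := by
  simp only [patterns, mask, Fintype.mem_piFinset]
  intro u
  split_ifs <;> simp

theorem card_patterns (A : Finset (Fin N)) : #(patterns (S := S) A) = Fintype.card S ^ #A := by
  rw [patterns, Fintype.card_piFinset]
  simp only [apply_ite Finset.card, card_univ, card_singleton]
  rw [prod_ite_mem, univ_inter, prod_const]

end Patterns

/-- Only the letters of `pattern` on the dependency set of `pos` matter. -/
structure Query (N : ℕ) (κ S : Type*) where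
  pos : Fin N
  head : κ
  pattern : Fin N → S

section Serving

open scoped Classical

variable {κ : Type*} (Sd : Fin N → Finset (Fin N)) (sc : Fin N → κ → (Fin N → S) → Fin N → ℝ)

def Pinned (ρ : Fin N → Option S) (j : Fin N) : Prop := ∀ u ∈ Sd j, (ρ u).isSome

theorem Pinned.mono {ρ ρ' : Fin N → Option S} {j : Fin N} (hj : Pinned Sd ρ j)
    (h : Extends ρ ρ') : Pinned Sd ρ' j :=
  fun u hu => h.isSome (hj u hu)

noncomputable def attended (θ : Query N κ S) (x : Fin N → S) : Fin N :=
  argmaxLeft θ.pos (sc θ.pos θ.head x)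

noncomputable def unpinned (ρ : Fin N → Option S) (i : Fin N) : Finset (Fin N) :=
  {j ∈ Iic i | ¬ Pinned Sd ρ j}

variable [Fintype S]

noncomputable def matching (ρ : Fin N → Option S) (θ : Query N κ S) : Finset (Fin N → S) :=
  {x | ConsistentWith ρ x ∧ ∀ u ∈ Sd θ.pos, x u = θ.pattern u}

theorem mem_matching {ρ : Fin N → Option S} {θ : Query N κ S} {x : Fin N → S} :
    x ∈ matching Sd ρ θ ↔ ConsistentWith ρ x ∧ ∀ u ∈ Sd θ.pos, x u = θ.pattern u := by
  simp [matching]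

theorem matching_anti {ρ ρ' : Fin N → Option S} (h : Extends ρ ρ') (θ : Query N κ S) :
    matching Sd ρ' θ ⊆ matching Sd ρ θ := fun x hx => by
  rw [mem_matching] at hx ⊢
  exact ⟨h.consistentWith hx.1, hx.2⟩

def Served (k : ℕ) (ρ : Fin N → Option S) (θ : Query N κ S) : Prop :=
  ∃ A : Finset (Fin N), #A ≤ k ∧
    ∀ x ∈ matching Sd ρ θ, attended sc θ x ∈ A ∨ Pinned Sd ρ (attended sc θ x)

theorem Served.mono {k : ℕ} {ρ ρ' : Fin N → Option S} {θ : Query N κ S}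
    (hθ : Served Sd sc k ρ θ) (h : Extends ρ ρ') : Served Sd sc k ρ' θ := by
  obtain ⟨A, hA, hmem⟩ := hθ
  exact ⟨A, hA, fun x hx => (hmem x (matching_anti Sd h θ hx)).imp_right (Pinned.mono Sd · h)⟩

theorem apply_attended_eq {β : Type*} {ρ : Fin N → Option S} {θ : Query N κ S}
    (hsc : ∀ j, DependsOnUnder ρ (fun x => sc θ.pos θ.head x j) (Sd θ.pos ∪ Sd j))
    {g : Fin N → (Fin N → S) → β} (hg : ∀ j, DependsOnUnder ρ (g j) (Sd j))
    {A : Finset (Fin N)}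
    (hA : ∀ x ∈ matching Sd ρ θ, attended sc θ x ∈ A ∨ Pinned Sd ρ (attended sc θ x))
    {x y : Fin N → S} (hx : x ∈ matching Sd ρ θ) (hy : y ∈ matching Sd ρ θ)
    (hxy : ∀ j ∈ A, ∀ u ∈ Sd j, x u = y u) :
    g (attended sc θ x) x = g (attended sc θ y) y := by
  obtain ⟨hxρ, hxθ⟩ := (mem_matching Sd).mp hx
  obtain ⟨hyρ, hyθ⟩ := (mem_matching Sd).mp hy
  have hagree : ∀ j, j ∈ A ∨ Pinned Sd ρ j → ∀ u ∈ Sd j, x u = y u := by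
    rintro j (hj | hj) u hu
    exacts [hxy j hj u hu, hxρ.eq_of_isSome hyρ (hj u hu)]
  have hattended : attended sc θ x = attended sc θ y :=
    argmaxLeft_eq_of_eqOn (hA x hx) (hA y hy) fun j hj =>
      hsc j x y hxρ hyρ fun u hu => (mem_union.mp hu).elim
        (fun hu => (hxθ u hu).trans (hyθ u hu).symm) (hagree j hj u)
  rw [← hattended]
  exact hg _ x y hxρ hyρ (hagree _ (hA x hx))

theorem served_of_card_unpinned_le {k : ℕ} {ρ : Fin N → Option S} {θ : Query N κ S}
    (h : #(unpinned Sd ρ θ.pos) ≤ k) : Served Sd sc k ρ θ := by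
  refine ⟨unpinned Sd ρ θ.pos, h, fun x _ => or_iff_not_imp_right.mpr fun hp => ?_⟩
  exact mem_filter.mpr ⟨mem_Iic.mpr (argmaxLeft_le_self _ _), hp⟩

noncomputable def unserved (k : ℕ) (Q : Finset (Query N κ S)) (ρ : Fin N → Option S) :
    Finset (Query N κ S) :=
  {θ ∈ Q | ¬ Served Sd sc k ρ θ}

theorem unserved_anti {k : ℕ} {Q : Finset (Query N κ S)} {ρ ρ' : Fin N → Option S}
    (h : Extends ρ ρ') : unserved Sd sc k Q ρ' ⊆ unserved Sd sc k Q ρ :=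
  fun _ hθ => mem_filter.mpr
    ⟨(mem_filter.mp hθ).1, fun hs => (mem_filter.mp hθ).2 (hs.mono Sd sc h)⟩

theorem nonempty_matching_of_mem_unserved {k : ℕ} {Q : Finset (Query N κ S)}
    {ρ : Fin N → Option S} {θ : Query N κ S} (hθ : θ ∈ unserved Sd sc k Q ρ) :
    (matching Sd ρ θ).Nonempty := by
  by_contra h
  exact (mem_filter.mp hθ).2 ⟨∅, Nat.zero_le k, fun x hx => (h ⟨x, hx⟩).elim⟩

theorem lt_card_unpinned_of_mem_unserved {k : ℕ} {Q : Finset (Query N κ S)}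
    {ρ : Fin N → Option S} {θ : Query N κ S} (hθ : θ ∈ unserved Sd sc k Q ρ) :
    k < #(unpinned Sd ρ θ.pos) :=
  lt_of_not_ge fun h => (mem_filter.mp hθ).2 (served_of_card_unpinned_le Sd sc h)

section Candidates

variable [Nonempty S]

noncomputable def bestInput (ρ : Fin N → Option S) (θ : Query N κ S) (z : Fin N) : Fin N → S :=
  Classical.epsilon fun w => w ∈ matching Sd ρ θ ∧
    ∀ x ∈ matching Sd ρ θ, sc θ.pos θ.head x z ≤ sc θ.pos θ.head w z

theorem bestInput_spec {ρ : Fin N → Option S} {θ : Query N κ S}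
    (h : (matching Sd ρ θ).Nonempty) (z : Fin N) :
    bestInput Sd sc ρ θ z ∈ matching Sd ρ θ ∧
      ∀ x ∈ matching Sd ρ θ, sc θ.pos θ.head x z ≤ sc θ.pos θ.head (bestInput Sd sc ρ θ z) z :=
  Classical.epsilon_spec ((matching Sd ρ θ).exists_max_image _ h)

noncomputable def rankKey (ρ : Fin N → Option S) (θ : Query N κ S) : Fin N → ℝ ×ₗ (Fin N)ᵒᵈ :=
  attnKey fun j => sc θ.pos θ.head (bestInput Sd sc ρ θ j) j

theorem rankKey_injective (ρ : Fin N → Option S) (θ : Query N κ S) :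
    Function.Injective (rankKey Sd sc ρ θ) :=
  attnKey_injective _

noncomputable def candidates (k : ℕ) (ρ : Fin N → Option S) (θ : Query N κ S) :
    Finset (Fin N) :=
  if h : k ≤ #(unpinned Sd ρ θ.pos) then
    (exists_subset_card_eq_forall_lt (rankKey_injective Sd sc ρ θ) _ h).choose
  else ∅

theorem candidates_spec {k : ℕ} {ρ : Fin N → Option S} {θ : Query N κ S}
    (h : k ≤ #(unpinned Sd ρ θ.pos)) :
    candidates Sd sc k ρ θ ⊆ unpinned Sd ρ θ.pos ∧ #(candidates Sd sc k ρ θ) = k ∧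
      ∀ z ∈ candidates Sd sc k ρ θ, ∀ j ∈ unpinned Sd ρ θ.pos, j ∉ candidates Sd sc k ρ θ →
        rankKey Sd sc ρ θ j < rankKey Sd sc ρ θ z := by
  rw [candidates, dif_pos h]
  exact (exists_subset_card_eq_forall_lt (rankKey_injective Sd sc ρ θ) _ h).choose_spec

/-- Fixing the dependency set of a candidate `z` as in its best input makes the score of `z`
constant and equal to its maximum, which no unpinned position outside the candidates can beat. -/
theorem served_fixOn {k : ℕ} {ρ : Fin N → Option S} {θ : Query N κ S}
    (hsc : ∀ j, DependsOnUnder ρ (fun x => sc θ.pos θ.head x j) (Sd θ.pos ∪ Sd j))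
    (hne : (matching Sd ρ θ).Nonempty) (hθ : k ≤ #(unpinned Sd ρ θ.pos)) {z : Fin N}
    (hz : z ∈ candidates Sd sc k ρ θ) {y : Fin N → S} (hy : ConsistentWith ρ y)
    (hyz : ∀ u ∈ Sd z, y u = bestInput Sd sc ρ θ z u) :
    Served Sd sc k (fixOn ρ (Sd z) y) θ := by
  obtain ⟨hsub, hcard, hrank⟩ := candidates_spec Sd sc hθ
  have hext := extends_fixOn hy (Sd z)
  obtain ⟨hbest, -⟩ := bestInput_spec Sd sc hne z
  obtain ⟨hbestρ, hbestθ⟩ := (mem_matching Sd).mp hbest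
  refine ⟨candidates Sd sc k ρ θ, hcard.le, fun x hx => ?_⟩
  have hxρ := matching_anti Sd hext θ hx
  obtain ⟨hxfix, hxθ⟩ := (mem_matching Sd).mp hx
  have hxz : sc θ.pos θ.head x z = sc θ.pos θ.head (bestInput Sd sc ρ θ z) z := by
    refine hsc z x _ (hext.consistentWith hxfix) hbestρ fun u hu => ?_
    rcases mem_union.mp hu with hu | hu
    · rw [hxθ u hu, hbestθ u hu]
    · rw [hxfix.eq_of_fixOn hu, hyz u hu]
  refine argmaxLeft_mem_of_attnKey_lt (p := fun j => j ∈ candidates Sd sc k ρ θ ∨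
    Pinned Sd (fixOn ρ (Sd z) y) j) (mem_Iic.mp (mem_filter.mp (hsub hz)).1) fun j hj hjE => ?_
  obtain ⟨hjc, hjp⟩ := not_or.mp hjE
  have hju : j ∈ unpinned Sd ρ θ.pos :=
    mem_filter.mpr ⟨mem_Iic.mpr hj, fun h => hjp (h.mono Sd hext)⟩
  calc attnKey (sc θ.pos θ.head x) j ≤ rankKey Sd sc ρ θ j :=
        attnKey_le_attnKey ((bestInput_spec Sd sc hne j).2 x hxρ)
    _ < rankKey Sd sc ρ θ z := hrank z hz j hju hjc
    _ = attnKey (sc θ.pos θ.head x) z := by simp [rankKey, attnKey, hxz]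

/-- The unserved queries that fixing the dependency set of `z` as in `y` serves at once. -/
noncomputable def batch (k : ℕ) (Q : Finset (Query N κ S)) (ρ : Fin N → Option S) (z : Fin N)
    (y : Fin N → S) : Finset (Query N κ S) :=
  {θ ∈ unserved Sd sc k Q ρ | z ∈ candidates Sd sc k ρ θ ∧
    ∀ u ∈ Sd z, y u = bestInput Sd sc ρ θ z u}

theorem card_unserved_fixOn_add_card_batch_le {k : ℕ} {Q : Finset (Query N κ S)}
    {ρ : Fin N → Option S}
    (hsc : ∀ i h j, DependsOnUnder ρ (fun x => sc i h x j) (Sd i ∪ Sd j)) (z : Fin N)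
    {y : Fin N → S} (hy : ConsistentWith ρ y) :
    #(unserved Sd sc k Q (fixOn ρ (Sd z) y)) + #(batch Sd sc k Q ρ z y) ≤
      #(unserved Sd sc k Q ρ) := by
  have hsub : unserved Sd sc k Q (fixOn ρ (Sd z) y) ⊆
      unserved Sd sc k Q ρ \ batch Sd sc k Q ρ z y := by
    intro θ hθ
    refine mem_sdiff.mpr ⟨unserved_anti Sd sc (extends_fixOn hy _) hθ, fun hb => ?_⟩
    obtain ⟨hθU, hz, hyz⟩ := mem_filter.mp hb
    exact (mem_filter.mp hθ).2 (served_fixOn Sd sc (hsc θ.pos θ.head)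
      (nonempty_matching_of_mem_unserved Sd sc hθU)
      (lt_card_unpinned_of_mem_unserved Sd sc hθU).le hz hy hyz)
  calc _ ≤ #(unserved Sd sc k Q ρ \ batch Sd sc k Q ρ z y) + #(batch Sd sc k Q ρ z y) :=
        Nat.add_le_add_right (card_le_card hsub) _
    _ = _ := card_sdiff_add_card_eq_card (filter_subset _ _)

theorem exists_extends_card_unserved_add_le {k a W : ℕ} {Q : Finset (Query N κ S)}
    {ρ : Fin N → Option S}
    (hsc : ∀ i h j, DependsOnUnder ρ (fun x => sc i h x j) (Sd i ∪ Sd j))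
    (hSd : ∀ j, #(Sd j) ≤ a)
    (hbatch : ∃ z, ∃ θ₁ ∈ unserved Sd sc k Q ρ,
      W ≤ #(batch Sd sc k Q ρ z (bestInput Sd sc ρ θ₁ z))) :
    ∃ ρ', Extends ρ ρ' ∧ numFixed ρ' ≤ numFixed ρ + a ∧
      #(unserved Sd sc k Q ρ') + W ≤ #(unserved Sd sc k Q ρ) := by
  obtain ⟨z, θ₁, hθ₁, hW⟩ := hbatch
  have hy := ((mem_matching Sd).mp
    (bestInput_spec Sd sc (nonempty_matching_of_mem_unserved Sd sc hθ₁) z).1).1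
  refine ⟨fixOn ρ (Sd z) (bestInput Sd sc ρ θ₁ z), extends_fixOn hy _,
    (numFixed_fixOn_le _ _ _).trans (Nat.add_le_add_left (hSd z) _), ?_⟩
  have := card_unserved_fixOn_add_card_batch_le Sd sc (k := k) (Q := Q) hsc z hy
  omega

theorem exists_batch_of_mem_unserved {k : ℕ} {Q : Finset (Query N κ S)}
    {ρ : Fin N → Option S} (hk : 0 < k) {θ : Query N κ S} (hθ : θ ∈ unserved Sd sc k Q ρ) :
    ∃ z, ∃ θ₁ ∈ unserved Sd sc k Q ρ, 1 ≤ #(batch Sd sc k Q ρ z (bestInput Sd sc ρ θ₁ z)) := by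
  obtain ⟨-, hcard, -⟩ := candidates_spec Sd sc (lt_card_unpinned_of_mem_unserved Sd sc hθ).le
  obtain ⟨z, hz⟩ := card_pos.mp (hcard ▸ hk)
  exact ⟨z, θ, hθ, card_pos.mpr ⟨θ, mem_filter.mpr ⟨hθ, hz, fun _ _ => rfl⟩⟩⟩

/-- Pigeonhole over the pairs (query, candidate): a pair is sorted into the bin given by the
candidate and the letters of its best input on the candidate's dependency set. -/
theorem exists_large_batch {k a W : ℕ} {Q : Finset (Query N κ S)} {ρ : Fin N → Option S}
    (hSd : ∀ j, #(Sd j) ≤ a) (hW : 0 < W) (hU : (unserved Sd sc k Q ρ).Nonempty)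
    (hk : N * Fintype.card S ^ a * W ≤ k * #(unserved Sd sc k Q ρ)) :
    ∃ z, ∃ θ₁ ∈ unserved Sd sc k Q ρ, W ≤ #(batch Sd sc k Q ρ z (bestInput Sd sc ρ θ₁ z)) := by
  set U := unserved Sd sc k Q ρ
  set pairs := U.sigma fun θ => candidates Sd sc k ρ θ
  set bins := (univ : Finset (Fin N)).sigma fun z => patterns (S := S) (Sd z)
  let bin : (Σ _ : Query N κ S, Fin N) → Σ _ : Fin N, Fin N → S :=
    fun p => ⟨p.2, mask (Sd p.2) (bestInput Sd sc ρ p.1 p.2)⟩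
  have hpairs : k * #U = #pairs := by
    rw [card_sigma, sum_congr rfl fun θ hθ =>
      (candidates_spec Sd sc (lt_card_unpinned_of_mem_unserved Sd sc hθ).le).2.1, sum_const,
      smul_eq_mul, mul_comm]
  have hbins : #bins ≤ N * Fintype.card S ^ a := by
    rw [card_sigma]
    calc ∑ z, #(patterns (S := S) (Sd z)) ≤ ∑ _z : Fin N, Fintype.card S ^ a :=
          sum_le_sum fun z _ => (card_patterns (Sd z)).trans_le
            (Nat.pow_le_pow_right Fintype.card_pos (hSd z))
      _ = N * Fintype.card S ^ a := by simp
  obtain ⟨θ₀, -⟩ := hU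
  obtain ⟨b, -, hb⟩ := exists_le_card_fiber_of_mul_le_card_of_maps_to (f := bin)
    (fun p _ => mem_sigma.mpr ⟨mem_univ _, mask_mem_patterns _ _⟩)
    ⟨⟨θ₀.pos, mask (Sd θ₀.pos) θ₀.pattern⟩, mem_sigma.mpr ⟨mem_univ _, mask_mem_patterns _ _⟩⟩
    (hpairs ▸ (Nat.mul_le_mul_right W hbins).trans hk)
  obtain ⟨p₁, hp₁⟩ := card_pos.mp (hW.trans_le hb)
  obtain ⟨hp₁pairs, hp₁b⟩ := mem_filter.mp hp₁
  refine ⟨p₁.2, p₁.1, (mem_sigma.mp hp₁pairs).1, hb.trans (card_le_card_of_injOn Sigma.fst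
    (fun p hp => ?_) fun p hp p' hp' h => ?_)⟩
  · obtain ⟨hp, hpb⟩ := mem_filter.mp hp
    obtain ⟨hpU, hpc⟩ := mem_sigma.mp hp
    obtain ⟨hz, hmask⟩ := Sigma.mk.inj_iff.mp (hpb.trans hp₁b.symm)
    rw [hz] at hpc hmask
    refine mem_filter.mpr ⟨hpU, hpc, fun u hu => ?_⟩
    have := congrFun (eq_of_heq hmask) u
    rwa [mask_apply_of_mem _ hu, mask_apply_of_mem _ hu, eq_comm] at this
  · have hz : p.2 = p'.2 := congrArg Sigma.fst
      ((mem_filter.mp hp).2.trans (mem_filter.mp hp').2.symm)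
    exact Sigma.ext h (heq_of_eq hz)

/-- A first greedy phase serves batches of `W` queries while more than `N / M` remain, a second
phase serves the rest one at a time. -/
theorem exists_extends_forall_served (Q : Finset (Query N κ S)) {ρ : Fin N → Option S}
    (hsc : ∀ i h j, DependsOnUnder ρ (fun x => sc i h x j) (Sd i ∪ Sd j)) {a M W : ℕ}
    (hSd : ∀ j, #(Sd j) ≤ a) (hM : 0 < M) (hW : 0 < W) :
    ∃ ρ', Extends ρ ρ' ∧ W * numFixed ρ' ≤ W * numFixed ρ + a * #Q + W * (a * (N / M)) ∧
      ∀ θ ∈ Q, Served Sd sc (M * Fintype.card S ^ a * W) ρ' θ := by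
  set k := M * Fintype.card S ^ a * W
  have hk : 0 < k := Nat.mul_pos (Nat.mul_pos hM (pow_pos Fintype.card_pos a)) hW
  have hsc' : ∀ ρ', Extends ρ ρ' → ∀ i h j,
      DependsOnUnder ρ' (fun x => sc i h x j) (Sd i ∪ Sd j) :=
    fun ρ' hρ' i h j => (hsc i h j).mono hρ' subset_rfl
  obtain ⟨ρ₁, h₁, hcost₁, hU₁⟩ := exists_extends_of_forall_exists_step
    (fun ρ' => #(unserved Sd sc k Q ρ')) (ρ₀ := ρ) (U := N / M) (a := a)
    (fun ρ' hρ' hlt => exists_extends_card_unserved_add_le Sd sc (hsc' ρ' hρ') hSd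
      (exists_large_batch Sd sc hSd hW (card_pos.mp (Nat.zero_lt_of_lt hlt)) (by
        calc N * Fintype.card S ^ a * W ≤ M * (N / M + 1) * Fintype.card S ^ a * W := by
              gcongr; exact (Nat.lt_mul_div_succ N hM).le
          _ = k * (N / M + 1) := by ring
          _ ≤ _ := Nat.mul_le_mul_left k hlt))) hW
  obtain ⟨ρ₂, h₂, hcost₂, hU₂⟩ := exists_extends_of_forall_exists_step
    (fun ρ' => #(unserved Sd sc k Q ρ')) (ρ₀ := ρ₁) (U := 0) (a := a)
    (fun ρ' hρ' hlt => exists_extends_card_unserved_add_le Sd sc (hsc' ρ' (h₁.trans hρ')) hSd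
      (exists_batch_of_mem_unserved Sd sc hk (card_pos.mp hlt).choose_spec)) one_pos
  refine ⟨ρ₂, h₁.trans h₂, ?_, fun θ hθ => ?_⟩
  · have hQ : #(unserved Sd sc k Q ρ) ≤ #Q := card_filter_le _ _
    have := Nat.mul_le_mul_left a hQ
    have := Nat.mul_le_mul_left (W * a) hU₁
    nlinarith
  · by_contra hns
    exact (card_pos.mpr ⟨θ, mem_filter.mpr ⟨hθ, hns⟩⟩).ne' (Nat.le_zero.mp hU₂)

end Candidates

end Serving

open scoped Classical in
noncomputable def queries [Fintype S] [Nonempty S] (Sd : Fin N → Finset (Fin N)) (H : ℕ) :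
    Finset (Query N ℕ S) :=
  univ.biUnion fun i => (range H ×ˢ patterns (S := S) (Sd i)).image fun p => ⟨i, p.1, p.2⟩

theorem mk_mask_mem_queries [Fintype S] [Nonempty S] (Sd : Fin N → Finset (Fin N)) {H h : ℕ}
    (hh : h < H) (i : Fin N) (x : Fin N → S) :
    (⟨i, h, mask (Sd i) x⟩ : Query N ℕ S) ∈ queries Sd H := by
  simp only [queries, mem_biUnion, mem_image]
  exact ⟨i, mem_univ i, (h, mask (Sd i) x), mem_product.mpr ⟨mem_range.mpr hh,
    mask_mem_patterns _ _⟩, rfl⟩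

theorem card_queries_le [Fintype S] [Nonempty S] {Sd : Fin N → Finset (Fin N)} {a : ℕ}
    (hSd : ∀ j, #(Sd j) ≤ a) (H : ℕ) :
    #(queries (S := S) Sd H) ≤ N * (H * Fintype.card S ^ a) := by
  classical
  refine (card_biUnion_le_card_mul _ _ _ fun i _ => card_image_le.trans ?_).trans_eq
    (by rw [card_univ, Fintype.card_fin])
  rw [card_product, card_range, card_patterns]
  exact Nat.mul_le_mul_left H (Nat.pow_le_pow_right Fintype.card_pos (hSd i))

end Restriction

namespace UHAT

open Restriction

variable {S : Type*} {N : ℕ}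

def IsLocal (T : UHAT S) (ρ : Fin N → Option S) (l a : ℕ) : Prop :=
  ∀ i : Fin N, ∃ A : Finset (Fin N), #A ≤ a ∧ DependsOnUnder ρ (fun x => T.act x l i) A

theorem IsLocal.mono {T : UHAT S} {ρ ρ' : Fin N → Option S} {l a a' : ℕ}
    (h : T.IsLocal ρ l a) (hρ : Extends ρ ρ') (ha : a ≤ a') : T.IsLocal ρ' l a' := fun i =>
  let ⟨A, hA, hdep⟩ := h i
  ⟨A, hA.trans ha, hdep.mono hρ subset_rfl⟩

theorem isLocal_zero (T : UHAT S) (ρ : Fin N → Option S) : T.IsLocal ρ 0 1 := fun i =>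
  ⟨{i}, (card_singleton i).le, fun x y _ _ hxy => by simp [act, hxy i (mem_singleton_self i)]⟩

theorem isLocal_of_isEmpty [IsEmpty S] (T : UHAT S) (ρ : Fin N → Option S) (l a : ℕ) :
    T.IsLocal ρ l a :=
  fun i => ⟨∅, Nat.zero_le a, fun x => isEmptyElim (x i)⟩

noncomputable def score (T : UHAT S) (k : ℕ) (i : Fin N) (h : ℕ) (x : Fin N → S) (j : Fin N) :
    ℝ :=
  (T.Kmat k h).mulVec (T.act x k j) ⬝ᵥ (T.Qmat k h).mulVec (T.act x k i)

theorem act_succ (T : UHAT S) (x : Fin N → S) (k : ℕ) (i : Fin N) :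
    T.act x (k + 1) i = T.mlp k (T.act x k i +
      ∑ h ∈ range T.H, (T.Vmat k h).mulVec (T.act x k (argmaxLeft i (T.score k i h x)))) :=
  rfl

theorem dependsOnUnder_score (T : UHAT S) {ρ : Fin N → Option S} {k : ℕ}
    {Sd : Fin N → Finset (Fin N)} (hdep : ∀ j, DependsOnUnder ρ (fun x => T.act x k j) (Sd j))
    (i : Fin N) (h : ℕ) (j : Fin N) :
    DependsOnUnder ρ (fun x => T.score k i h x j) (Sd i ∪ Sd j) :=
  (hdep i).map₂ (hdep j) fun yi yj => (T.Kmat k h).mulVec yj ⬝ᵥ (T.Qmat k h).mulVec yi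

theorem isLocal_succ_of_served [Fintype S] [Nonempty S] (T : UHAT S) {ρ : Fin N → Option S}
    {k a c : ℕ} {Sd : Fin N → Finset (Fin N)} (hSd : ∀ j, #(Sd j) ≤ a)
    (hdep : ∀ j, DependsOnUnder ρ (fun x => T.act x k j) (Sd j))
    (hserved : ∀ θ ∈ queries Sd T.H, Served Sd (T.score k) c ρ θ) :
    T.IsLocal ρ (k + 1) (a + T.H * (Fintype.card S ^ a * (c * a))) := by
  classical
  choose! A hAcard hA using hserved
  intro i
  refine ⟨Sd i ∪ (range T.H).biUnion fun h => (patterns (Sd i)).biUnion fun σ =>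
    (A ⟨i, h, σ⟩).biUnion Sd, (card_union_le _ _).trans (Nat.add_le_add (hSd i) ?_), ?_⟩
  · refine (card_biUnion_le_card_mul _ _ _ fun h hh => ?_).trans_eq (by rw [card_range])
    refine (card_biUnion_le_card_mul _ _ _ fun σ hσ => ?_).trans (by
      rw [card_patterns]; exact Nat.mul_le_mul_right _
        (Nat.pow_le_pow_right Fintype.card_pos (hSd i)))
    refine card_biUnion_le_card_mul _ _ _ (fun j _ => hSd j) |>.trans
      (Nat.mul_le_mul_right a (hAcard _ ?_))
    simpa [queries] using ⟨mem_range.mp hh, hσ⟩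
  intro x y hx hy hxy
  have hi : T.act x k i = T.act y k i :=
    hdep i x y hx hy fun u hu => hxy u (mem_union_left _ hu)
  dsimp only
  rw [act_succ, act_succ, hi]
  congr 2
  refine sum_congr rfl fun h hh => ?_
  have hθ := mk_mask_mem_queries Sd (mem_range.mp hh) i x
  refine apply_attended_eq Sd (T.score k) (T.dependsOnUnder_score hdep i h)
    (g := fun j x => (T.Vmat k h).mulVec (T.act x k j)) (fun j => (hdep j).map _) (hA _ hθ)
    ((mem_matching Sd).mpr ⟨hx, fun u hu => (mask_apply_of_mem x hu).symm⟩)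
    ((mem_matching Sd).mpr ⟨hy, fun u hu => ?_⟩) fun j hj u hu => hxy u ?_
  · change y u = mask (Sd i) x u
    rw [mask_apply_of_mem x (show u ∈ Sd i from hu)]
    exact (hxy u (mem_union_left _ hu)).symm
  · exact mem_union_right _ (mem_biUnion.mpr ⟨h, hh, mem_biUnion.mpr
      ⟨_, mask_mem_patterns _ x, mem_biUnion.mpr ⟨j, hj, hu⟩⟩⟩)

/-- The exceptional sets of a layer have `k = M q^a W` elements, where `M = 2Ba + 1` and
`W = 2BaHq^a + 1` are the greedy parameters that keep the cost of the layer below `N / B`. -/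
def widthStep (B H q a : ℕ) : ℕ :=
  a + H * (q ^ a * ((2 * B * a + 1) * q ^ a * (2 * B * a * (H * q ^ a) + 1) * a))

theorem exists_extends_isLocal_succ [Fintype S] (T : UHAT S) {ρ : Fin N → Option S} {k a : ℕ}
    (B : ℕ) (h : T.IsLocal ρ k a) :
    ∃ ρ', Extends ρ ρ' ∧ B * numFixed ρ' ≤ B * numFixed ρ + N ∧
      T.IsLocal ρ' (k + 1) (widthStep B T.H (Fintype.card S) a) := by
  rcases isEmpty_or_nonempty S with hS | hS
  · exact ⟨ρ, .refl ρ, Nat.le_add_right _ _, T.isLocal_of_isEmpty _ _ _⟩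
  choose Sd hSd hdep using h
  set P := T.H * Fintype.card S ^ a
  set W := 2 * B * a * P + 1
  obtain ⟨ρ', hρ', hcost, hserved⟩ := exists_extends_forall_served Sd (T.score k)
    (queries Sd T.H) (T.dependsOnUnder_score hdep) hSd (M := 2 * B * a + 1) (W := W)
    (Nat.succ_pos _) (Nat.succ_pos _)
  refine ⟨ρ', hρ', ?_, T.isLocal_succ_of_served hSd (fun j => (hdep j).mono hρ' subset_rfl)
    hserved⟩
  have hQ : 2 * B * (a * #(queries Sd T.H)) ≤ W * N :=
    calc 2 * B * (a * #(queries Sd T.H)) ≤ 2 * B * (a * (N * P)) := by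
          gcongr; exact card_queries_le hSd T.H
      _ = 2 * B * a * P * N := by ring
      _ ≤ W * N := Nat.mul_le_mul_right N (Nat.le_succ _)
  have hM : 2 * B * (a * (N / (2 * B * a + 1))) ≤ N :=
    calc 2 * B * (a * (N / (2 * B * a + 1))) = N / (2 * B * a + 1) * (2 * B * a) := by ring
      _ ≤ N / (2 * B * a + 1) * (2 * B * a + 1) := Nat.mul_le_mul_left _ (Nat.le_succ _)
      _ ≤ N := Nat.div_mul_le_self N _
  have hW : W * (2 * B * numFixed ρ') ≤ W * (2 * (B * numFixed ρ + N)) :=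
    calc W * (2 * B * numFixed ρ') = 2 * B * (W * numFixed ρ') := by ring
      _ ≤ 2 * B * (W * numFixed ρ + a * #(queries Sd T.H) +
          W * (a * (N / (2 * B * a + 1)))) := Nat.mul_le_mul_left _ hcost
      _ = W * (2 * B * numFixed ρ) + 2 * B * (a * #(queries Sd T.H)) +
          W * (2 * B * (a * (N / (2 * B * a + 1)))) := by ring
      _ ≤ W * (2 * B * numFixed ρ) + W * N + W * N := by gcongr
      _ = W * (2 * (B * numFixed ρ + N)) := by ring
  have := Nat.le_of_mul_le_mul_left hW (Nat.succ_pos _)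
  rw [mul_assoc] at this
  omega

theorem exists_restriction_isLocal [Fintype S] (T : UHAT S) (B n : ℕ) :
    ∃ ρ : Fin N → Option S, B * numFixed ρ ≤ n * N ∧
      ∀ l ≤ n, T.IsLocal ρ l ((widthStep B T.H (Fintype.card S))^[l] 1) := by
  induction n with
  | zero =>
    refine ⟨fun _ => none, by simp [numFixed], fun l hl => ?_⟩
    obtain rfl := Nat.le_zero.mp hl
    exact T.isLocal_zero _
  | succ n ih =>
    obtain ⟨ρ, hcost, hloc⟩ := ih
    obtain ⟨ρ', hρ', hcost', hloc'⟩ := T.exists_extends_isLocal_succ B (hloc n le_rfl)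
    refine ⟨ρ', by rw [Nat.succ_mul]; omega, fun l hl => ?_⟩
    rcases hl.lt_or_eq with hl | rfl
    · exact (hloc l (Nat.le_of_lt_succ hl)).mono hρ' le_rfl
    · rwa [Function.iterate_succ_apply']

end UHAT

theorem restriction_lemma_strengthened_general {S : Type*} [Fintype S]
    (L H : ℕ) (C : ℝ) (hC1 : C < 1) :
    ∃ c K : ℕ, ∀ T : UHAT S, T.L = L → T.H = H → ∀ N : ℕ, K < N →
      ∃ ρ : Fin N → Option S,
        (C * N ≤ ((Finset.univ.filter fun i : Fin N => (ρ i).isNone).card : ℝ)) ∧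
        ∀ i : Fin N, ∀ l : ℕ, 1 ≤ l → l ≤ T.L →
          ∃ Sset : Finset (Fin N), Sset.card ≤ c ∧
            ∀ x y : Fin N → S, ConsistentWith ρ x → ConsistentWith ρ y →
              (∀ j ∈ Sset, x j = y j) → T.act x l i = T.act y l i := by
  set D := ⌈(1 - C)⁻¹⌉₊
  set width := UHAT.widthStep ((L + 1) * D) H (Fintype.card S)
  refine ⟨width^[L] 1, 0, fun T hL hH N _ => ?_⟩
  obtain ⟨ρ, hcost, hloc⟩ := T.exists_restriction_isLocal ((L + 1) * D) L
  rw [hH] at hloc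
  refine ⟨ρ, Restriction.mul_le_card_isNone hC1 ?_, fun i l _ hl => ?_⟩
  · refine Nat.le_of_mul_le_mul_left ?_ (Nat.succ_pos L)
    rw [← mul_assoc]
    exact hcost.trans (Nat.mul_le_mul_right N (Nat.le_succ L))
  · obtain ⟨A, hA, hdep⟩ := hloc l (hL ▸ hl) i
    have hwidth : width^[l] 1 ≤ width^[L] 1 :=
      Function.monotone_iterate_of_id_le (fun a => Nat.le_add_right a _) (hL ▸ hl) 1
    exact ⟨A, hA.trans hwidth, hdep⟩

/-- **Strengthened restriction lemma.** For all `L`, `H`, every finite alphabet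
`S`, and every `C ∈ (0,1)`, there are `c`, `K` such that for every UHAT transformer over `S`
with `L` layers and `H` heads per layer and every input length `N > K`, some restriction `ρ`
leaves at least `C·N` positions open while making every activation `y_i^{(l)}` (for layers
`1 ≤ l ≤ L`) depend on at most `c` input positions on inputs consistent with `ρ`. -/
theorem restriction_lemma_strengthened {S : Type*} [Fintype S]
    (L H : ℕ) (C : ℝ) (hC0 : 0 < C) (hC1 : C < 1) :
    ∃ c K : ℕ, ∀ T : UHAT S, T.L = L → T.H = H → ∀ N : ℕ, K < N →
      ∃ ρ : Fin N → Option S,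
        (C * N ≤ ((Finset.univ.filter fun i : Fin N => (ρ i).isNone).card : ℝ)) ∧
        ∀ i : Fin N, ∀ l : ℕ, 1 ≤ l → l ≤ T.L →
          ∃ Sset : Finset (Fin N), Sset.card ≤ c ∧
            ∀ x y : Fin N → S, ConsistentWith ρ x → ConsistentWith ρ y →
              (∀ j ∈ Sset, x j = y j) → T.act x l i = T.act y l i :=
  restriction_lemma_strengthened_general L H C hC1
end

section
/- The prefix-parity chain of thought for Parity, defined for x ∈ {0,1}^N by g(x) = (s_1, s_2, …, s_N) where s_i = x_1 ⊕ x_2 ⊕ ⋯ ⊕ x_i (so g(x) has length N and ends in Parity(x)), is expressible in UHAT: there are constants L, H such that for every n there is a UHAT transformer with at most L layers and H heads per layer computing this CoT on all x with |x·g(x)| = n. -/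
open Matrix Filter

/-- The prefix-parity chain of thought: on `x ∈ {0,1}^N` it consists of the parities of the
prefixes `x₁…xᵢ`, `i = 1, …, N`. -/
def prefixParityCoT (x : List Bool) : List Bool :=
  List.ofFn fun i : Fin x.length => parity (x.take (i.val + 1))

/-! The `i`-th chain-of-thought symbol is `sᵢ = sᵢ₋₁ ⊕ xᵢ`. With `N = |x|`, it is predicted at
position `N + i - 1`, which holds the token `sᵢ₋₁`, while `xᵢ` sits exactly `c = N - 1` positions
earlier. One hard-attention head finds the position at a fixed offset `c` from positional
encodings `(1, p, p²)`: the score `2pj - 2cj - j² = (p - c)² - (j - (p - c))²` is uniquely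
maximised at `j = p - c`. The MLP then XORs the attended bit with the current one, except at the
first chain-of-thought position `p = c`, where the current token is still an input bit. -/

lemma parity_append (l₁ l₂ : List Bool) : parity (l₁ ++ l₂) = xor (parity l₁) (parity l₂) := by
  rw [parity, parity, parity, List.count_append, Nat.add_mod]
  rcases Nat.mod_two_eq_zero_or_one (l₁.count true) with h₁ | h₁ <;>
    rcases Nat.mod_two_eq_zero_or_one (l₂.count true) with h₂ | h₂ <;> simp [h₁, h₂]

lemma parity_take_add_one (x : List Bool) {i : ℕ} (hi : i < x.length) :
    parity (x.take (i + 1)) = xor (parity (x.take i)) x[i] := by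
  rw [List.take_add_one, List.getElem?_eq_getElem hi, Option.toList_some, parity_append]
  cases x[i] <;> rfl

@[simp]
lemma length_prefixParityCoT (x : List Bool) : (prefixParityCoT x).length = x.length :=
  List.length_ofFn

@[simp]
lemma getElem_prefixParityCoT (x : List Bool) (i : ℕ) (hi : i < (prefixParityCoT x).length) :
    (prefixParityCoT x)[i] = parity (x.take (i + 1)) :=
  List.getElem_ofFn ..

lemma parity_suffix_prefixParityCoT (x : List Bool) (hx : x ≠ []) :
    [parity x] <:+ prefixParityCoT x := by
  have hne : prefixParityCoT x ≠ [] := by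
    rwa [← List.length_pos_iff, length_prefixParityCoT, List.length_pos_iff]
  have hlast : (prefixParityCoT x).getLast hne = parity x := by
    rw [List.getLast_eq_getElem, getElem_prefixParityCoT, length_prefixParityCoT,
      Nat.sub_add_cancel (List.length_pos_iff.mpr hx), List.take_length]
  rw [← List.dropLast_append_getLast hne, hlast]
  exact List.suffix_append _ _

lemma argmaxLeft_eq_of_lt {n : ℕ} {i j : Fin n} {f : Fin n → ℝ} (hji : j ≤ i)
    (hlt : ∀ k ≤ i, k ≠ j → f k < f j) : argmaxLeft i f = j := by
  by_contra hne
  obtain ⟨hle, hmax⟩ : argmaxLeft i f ∈ Finset.Iic i ∧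
      ∀ k ∈ Finset.Iic i, f k ≤ f (argmaxLeft i f) :=
    Finset.mem_filter.mp (Finset.min'_mem _ _)
  exact (hlt _ (Finset.mem_Iic.mp hle) hne).not_ge (hmax j (Finset.mem_Iic.mpr hji))

lemma UHAT.act_succ_of_H_eq_one {V : Type*} (T : UHAT V) (hH : T.H = 1) {n : ℕ}
    (w : Fin n → V) (k : ℕ) (i : Fin n) :
    T.act w (k + 1) i = T.mlp k (T.act w k i + T.Vmat k 0 *ᵥ T.act w k (argmaxLeft i fun j =>
      T.Kmat k 0 *ᵥ T.act w k j ⬝ᵥ T.Qmat k 0 *ᵥ T.act w k i)) := by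
  rw [UHAT.act, hH, Finset.sum_range_one]

namespace XorLookback

noncomputable def bitVal (b : Bool) : ℝ := if b then 1 else 0

noncomputable def bitOf (r : ℝ) : Bool := decide (0 < r)

lemma bitOf_bitVal (b : Bool) : bitOf (bitVal b) = b := by
  cases b <;> simp [bitOf, bitVal]

noncomputable def bitVec (b : Bool) : Fin 5 → ℝ := ![bitVal b, bitVal !b, 0, 0, 0]

lemma bitVec_dotProduct_bitVec (u b : Bool) : bitVec u ⬝ᵥ bitVec b = oneHot b u := by
  cases u <;> cases b <;> simp [bitVec, bitVal, oneHot, dotProduct, Fin.sum_univ_five]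

noncomputable def query (c : ℕ) : Matrix (Fin 5) (Fin 5) ℝ :=
  !![0, 0, 0, 0, 0; 0, 0, 0, 0, 0; 0, -2 * c, 2, 0, 0; 0, -1, 0, 0, 0; 0, 0, 0, 0, 0]

noncomputable def mlpBit (c : ℕ) (z : Fin 5 → ℝ) : Bool :=
  xor (decide ((c : ℝ) < z 2) && bitOf (z 0)) (bitOf (z 4))

/-- Residual-stream coordinates: own bit, constant `1`, position `p`, `p ^ 2`, and a slot into
which the value matrix copies the attended bit. -/
noncomputable def uhat (c nmax : ℕ) : UHAT Bool where
  d := 5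
  nmax := nmax
  L := 1
  H := 1
  vocab := Finset.univ
  embed b := ![bitVal b, 0, 0, 0, 0]
  pos p := ![0, 1, p, p ^ 2, 0]
  Kmat _ _ := 1
  Qmat _ _ := query c
  Vmat _ _ := Matrix.single 4 0 1
  mlp _ := bitVec ∘ mlpBit c
  outm := bitVec

variable (c nmax : ℕ) {m : ℕ} (w : Fin m → Bool)

lemma uhat_act_zero (j : Fin m) :
    (uhat c nmax).act w 0 j = ![bitVal (w j), 1, j, (j : ℝ) ^ 2, 0] := by
  funext t
  fin_cases t <;> simp [UHAT.act, uhat]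

lemma uhat_score (i j : Fin m) :
    (uhat c nmax).Kmat 0 0 *ᵥ (uhat c nmax).act w 0 j ⬝ᵥ
        (uhat c nmax).Qmat 0 0 *ᵥ (uhat c nmax).act w 0 i =
      ((i : ℝ) - c) ^ 2 - ((j : ℝ) - (i - c)) ^ 2 := by
  rw [uhat_act_zero, uhat_act_zero]
  change (1 : Matrix (Fin 5) (Fin 5) ℝ) *ᵥ _ ⬝ᵥ query c *ᵥ _ = _
  simp [query, Matrix.mulVec, dotProduct, Fin.sum_univ_five]
  ring

lemma argmaxLeft_uhat_score {i j : Fin m} (hij : (i : ℕ) = c + j) :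
    (argmaxLeft i fun k => (uhat c nmax).Kmat 0 0 *ᵥ (uhat c nmax).act w 0 k ⬝ᵥ
      (uhat c nmax).Qmat 0 0 *ᵥ (uhat c nmax).act w 0 i) = j := by
  have hj : (j : ℝ) = i - c := by rw [hij]; push_cast; ring
  refine argmaxLeft_eq_of_lt (Fin.le_def.mpr (by omega)) fun k _ hkj => ?_
  have hk : (k : ℝ) - (i - c) ≠ 0 := by
    rw [← hj, sub_ne_zero, Ne, Nat.cast_inj]
    exact Fin.val_ne_of_ne hkj
  rw [uhat_score, uhat_score, hj, sub_self]
  nlinarith [sq_pos_of_ne_zero hk]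

lemma uhat_act_one {i j : Fin m} (hij : (i : ℕ) = c + j) :
    (uhat c nmax).act w 1 i = bitVec (xor (decide (c < (i : ℕ)) && w i) (w j)) := by
  rw [UHAT.act_succ_of_H_eq_one _ rfl, argmaxLeft_uhat_score c nmax w hij]
  change bitVec (mlpBit c ((_ : Fin 5 → ℝ) +
    Matrix.single (4 : Fin 5) (0 : Fin 5) (1 : ℝ) *ᵥ _)) = _
  rw [uhat_act_zero, uhat_act_zero]
  simp [mlpBit, Matrix.single_mulVec, bitOf_bitVal]

lemma uhat_output (s : List Bool) {p : ℕ} (hcp : c ≤ p) (hp : p < s.length) :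
    (uhat c nmax).output s p = oneHot (xor (decide (c < p) && s[p]) s[p - c]) := by
  rw [UHAT.output, dif_pos hp]
  funext u
  rw [show (uhat c nmax).L = 1 from rfl,
    uhat_act_one c nmax s.get (j := ⟨p - c, by omega⟩) (by simp only; omega)]
  exact bitVec_dotProduct_bitVec u _

theorem uhat_computes_prefixParityCoT (x : List Bool) {nmax : ℕ}
    (h : (x ++ prefixParityCoT x).length ≤ nmax) :
    (uhat (x.length - 1) nmax).Computes x (prefixParityCoT x) := by
  refine ⟨fun _ _ => Finset.mem_univ _, h, fun ⟨i, hi⟩ => ?_⟩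
  rw [length_prefixParityCoT] at hi
  have hp : x.length + i - 1 < (x ++ prefixParityCoT x).length := by
    rw [List.length_append, length_prefixParityCoT]
    omega
  rw [uhat_output _ _ _ (by omega) hp]
  congr 1
  have hsub : x.length + i - 1 - (x.length - 1) = i := by omega
  simp only [hsub, List.get_eq_getElem, getElem_prefixParityCoT, parity_take_add_one x hi,
    List.getElem_append_left hi]
  congr 1
  rcases i with _ | i
  · simp [parity]
  · have hlt : x.length - 1 < x.length + (i + 1) - 1 := by omega
    rw [decide_eq_true hlt, Bool.true_and, List.getElem_append_right (by omega),
      getElem_prefixParityCoT]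
    congr 2
    omega

end XorLookback

/-- The prefix-parity chain of thought has length `N`, ends in `Parity(x)`,
and is expressible in UHAT. -/
theorem prefix_parity_cot_expressible :
    (∀ x : List Bool, (prefixParityCoT x).length = x.length) ∧
    (∀ x : List Bool, x ≠ [] → [parity x] <:+ prefixParityCoT x) ∧
    ExpressibleUHAT (id : Bool → Bool) prefixParityCoT := by
  refine ⟨length_prefixParityCoT, parity_suffix_prefixParityCoT, 1, 1, fun n =>
    ⟨XorLookback.uhat (n / 2 - 1) n, le_rfl, le_rfl, fun x hx => ?_⟩⟩
  rw [List.map_id] at hx ⊢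
  have hc : n / 2 - 1 = x.length - 1 := by
    rw [List.length_append, length_prefixParityCoT] at hx
    omega
  rw [hc]
  exact XorLookback.uhat_computes_prefixParityCoT x hx.le
end

section
/- Let N ≥ 1 and define IP : {0,1}^{N+1} × {0,1}^{N+1} → {0,1} by IP(ξ, η) = ⊕_{i=0}^{N} ξ_i · η_{N−i} (the parity of the number of indices i with ξ_i = η_{N−i} = 1). For every partial assignment fixing at most N of the 2(N+1) input coordinates (i.e. every set F of coordinates with |F| ≤ N together with values for the coordinates in F), the function IP is not constant on the set of inputs agreeing with the assignment on F. -/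
/-! Fixing fewer than `N + 1` coordinates leaves some pair `(ξ_i, η_{N−i})` entirely free.
Set every free `ξ_j` to `0` and every free `η_j` to `1`; switching `ξ_i` to `1` then adds
exactly one index to the count defining `IP`, so it flips the parity. -/

/-- The inner-product parity `IP(ξ, η) = ⊕_{i=0}^{N} ξ_i · η_{N−i}`: `true` iff the number
of indices `i` with `ξ_i = η_{N−i} = 1` is odd. -/
def innerParity {N : ℕ} (ξ η : Fin (N + 1) → Bool) : Bool :=
  decide
    ((Finset.univ.filter fun i : Fin (N + 1) => ξ i = true ∧ η i.rev = true).card % 2 = 1)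

open Finset in
theorem Finset.exists_inl_notMem_and_inr_notMem {α β : Type*} [Fintype α] [DecidableEq α]
    (F : Finset (α ⊕ β)) (e : α ≃ β) (hF : #F < Fintype.card α) :
    ∃ a, Sum.inl a ∉ F ∧ Sum.inr (e a) ∉ F := by
  by_contra! h
  have hcover : (univ : Finset α) ⊆ F.toLeft ∪ F.toRight.map e.symm.toEmbedding := by
    intro a _
    by_cases ha : Sum.inl a ∈ F
    · simp [ha]
    · exact mem_union_right _ (mem_map_equiv.2 (by simpa using h a ha))
  have := (card_le_card hcover).trans (card_union_le _ _)
  rw [card_univ, card_map, card_toLeft_add_card_toRight] at this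
  omega

theorem innerParity_update_of_eq_false {N : ℕ} (ξ η : Fin (N + 1) → Bool) (i : Fin (N + 1))
    (hξ : ξ i = false) (hη : η i.rev = true) :
    innerParity (Function.update ξ i true) η = !innerParity ξ η := by
  set S := Finset.univ.filter fun j : Fin (N + 1) => ξ j = true ∧ η j.rev = true
  have hS : (Finset.univ.filter fun j => Function.update ξ i true j = true ∧ η j.rev = true)
      = insert i S := by
    ext j
    by_cases hji : j = i
    · subst hji; simp [hη]
    · simp [S, hji]
  have hiS : i ∉ S := by simp [S, hξ]
  change decide (_ % 2 = 1) = !decide (S.card % 2 = 1)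
  rw [hS, Finset.card_insert_of_notMem hiS]
  rcases Nat.mod_two_eq_zero_or_one S.card with hpar | hpar <;> simp [hpar, Nat.add_mod]

/-- For every partial assignment fixing at most `N` of the `2(N+1)` input
coordinates (`F` with its prescribed values `val`), the function `IP` is not constant on the
set of inputs agreeing with the assignment on `F`. -/
theorem inner_parity_not_fixed (N : ℕ)
    (F : Finset (Fin (N + 1) ⊕ Fin (N + 1))) (hF : F.card ≤ N)
    (val : Fin (N + 1) ⊕ Fin (N + 1) → Bool) :
    ∃ ξ η ξ' η' : Fin (N + 1) → Bool,
      (∀ i : Fin (N + 1), Sum.inl i ∈ F → ξ i = val (Sum.inl i)) ∧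
      (∀ i : Fin (N + 1), Sum.inr i ∈ F → η i = val (Sum.inr i)) ∧
      (∀ i : Fin (N + 1), Sum.inl i ∈ F → ξ' i = val (Sum.inl i)) ∧
      (∀ i : Fin (N + 1), Sum.inr i ∈ F → η' i = val (Sum.inr i)) ∧
      innerParity ξ η ≠ innerParity ξ' η' := by
  obtain ⟨i, hξi, hηi⟩ := F.exists_inl_notMem_and_inr_notMem Fin.revPerm
    (by rw [Fintype.card_fin]; omega)
  rw [Fin.revPerm_apply] at hηi
  let ξ j := if Sum.inl j ∈ F then val (Sum.inl j) else false
  let η j := if Sum.inr j ∈ F then val (Sum.inr j) else true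
  have hflip := innerParity_update_of_eq_false ξ η i (by simp [ξ, hξi]) (by simp [η, hηi])
  refine ⟨ξ, η, Function.update ξ i true, η, fun j hj => by simp [ξ, hj],
    fun j hj => by simp [η, hj], fun j hj => ?_, fun j hj => by simp [η, hj], ?_⟩
  · rw [Function.update_of_ne (by rintro rfl; exact hξi hj)]
    simp [ξ, hj]
  · rw [hflip]
    exact (Bool.not_ne_self _).symm
end

section
/- Fix B ≥ 1 and N ≥ 2, and let med : ({0,…,2^B − 1})^N → {0,…,2^B − 1} map a tuple of N numbers to its ⌊N/2⌋-th smallest element (counting multiplicity, 1-indexed). Encode the input as N·B bits (B bits per number). If a partial assignment of the N·B input bits leaves at least ⌈N/2⌉ + 1 of the N numbers completely free (none of their B bits fixed), then med is not constant on the set of inputs agreeing with the assignment. In particular, any partial assignment fixing fewer than ⌊N/2⌋ − 1 bits leaves med non-constant. -/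
/-- The position, among the `N·B` input bits, of the `t`-th bit of the `j`-th number. -/
def bitIndex {N B : ℕ} (j : Fin N) (t : Fin B) : Fin (N * B) :=
  ⟨j.val * B + t.val, by
    have ht := t.isLt
    have hj : j.val + 1 ≤ N := j.isLt
    calc j.val * B + t.val < (j.val + 1) * B := by rw [Nat.add_mul, Nat.one_mul]; omega
      _ ≤ N * B := Nat.mul_le_mul_right B hj⟩

/-- The value (in `{0, …, 2^B − 1}`) of the `j`-th of the `N` `B`-bit numbers encoded in
the `N·B` input bits `w`. -/
def numValAt {N B : ℕ} (w : Fin (N * B) → Bool) (j : Fin N) : ℕ :=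
  ∑ t : Fin B, if w (bitIndex j t) then 2 ^ t.val else 0

/-- The `⌊N/2⌋`-th smallest (1-indexed, counting multiplicity) of the `N` numbers encoded
in `w`. -/
def medOf {N B : ℕ} (w : Fin (N * B) → Bool) : ℕ :=
  (Multiset.sort (↑(List.ofFn (numValAt w)) : Multiset ℕ) (· ≤ ·)).getD (N / 2 - 1) 0

/-!
Fill every bit outside `F` with `0` or with `1`. With all bits `0`, each of the more than
`⌈N/2⌉` free numbers is `0`, so at least `⌊N/2⌋` numbers vanish and the median is `0`.
With all bits `1`, each free number is at least `1` (here `B ≥ 1`), so at most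
`N - (⌈N/2⌉ + 1) = ⌊N/2⌋ - 1` numbers vanish and the median is positive. For the second claim,
every number that is not free owns a bit of `F`, and distinct numbers own distinct bits.
-/

theorem Multiset.sort_replicate_add {α : Type*} [LinearOrder α] {a : α} {t : Multiset α}
    (ha : ∀ b ∈ t, a ≤ b) (c : ℕ) :
    (replicate c a + t).sort (· ≤ ·) = List.replicate c a ++ t.sort (· ≤ ·) := by
  induction c with
  | zero => simp
  | succ c ih =>
    rw [replicate_succ, cons_add, sort_cons, ih, List.replicate_succ, List.cons_append]
    intro b hb
    rcases mem_add.1 hb with hb | hb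
    · exact (eq_of_mem_replicate hb).ge
    · exact ha b hb

theorem Multiset.getD_sort_eq_iff_lt_count {α : Type*} [LinearOrder α] {s : Multiset α} {a : α}
    (ha : ∀ b ∈ s, a ≤ b) {k : ℕ} (hk : k < card s) (d : α) :
    (s.sort (· ≤ ·)).getD k d = a ↔ k < s.count a := by
  set t := s.filter (· ≠ a)
  have hs : replicate (s.count a) a + t = s := by
    rw [← filter_eq', filter_add_not]
  have hsort : s.sort (· ≤ ·) = List.replicate (s.count a) a ++ t.sort (· ≤ ·) := by
    conv_lhs => rw [← hs]
    exact sort_replicate_add (fun b hb => ha b (mem_of_mem_filter hb)) _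
  have hcard : card s = s.count a + card t := by
    conv_lhs => rw [← hs]
    rw [card_add, card_replicate]
  rw [hsort]
  rcases lt_or_ge k (s.count a) with hlt | hge
  · rw [List.getD_append _ _ _ _ (by simpa using hlt)]
    exact iff_of_true (List.getD_replicate a hlt) hlt
  · rw [List.getD_append_right _ _ _ _ (by simpa using hge), iff_false_intro (not_lt.2 hge),
      iff_false]
    have hmem : (t.sort (· ≤ ·)).getD (k - (List.replicate (s.count a) a).length) d ∈ t := by
      rw [List.getD_eq_getElem _ _ (by simp; omega)]
      exact (mem_sort _).1 (List.getElem_mem _)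
    exact of_mem_filter (p := (· ≠ a)) hmem

open Finset

theorem Multiset.count_coe_ofFn {α : Type*} [DecidableEq α] {N : ℕ} (f : Fin N → α) (a : α) :
    (↑(List.ofFn f) : Multiset α).count a = #{j | f j = a} := by
  rw [← Fin.univ_val_map, Multiset.count_map, card_def, filter_val]
  simp_rw [eq_comm]

section Bits

variable {N B : ℕ}

theorem divNat_bitIndex (j : Fin N) (t : Fin B) : (bitIndex j t).divNat = j := by
  have : bitIndex j t = Fin.mkDivMod j t := Fin.ext (by simp [bitIndex, Fin.mkDivMod, mul_comm])
  rw [this, Fin.divNat_mkDivMod]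

theorem numValAt_eq_zero_iff (w : Fin (N * B) → Bool) (j : Fin N) :
    numValAt w j = 0 ↔ ∀ t, w (bitIndex j t) = false := by
  simp [numValAt, Finset.sum_eq_zero_iff]

theorem medOf_eq_zero_iff (hN : 0 < N) (w : Fin (N * B) → Bool) :
    medOf w = 0 ↔ N / 2 - 1 < #{j | numValAt w j = 0} := by
  rw [medOf, Multiset.getD_sort_eq_iff_lt_count (fun b _ => Nat.zero_le b) (by simp; omega),
    Multiset.count_coe_ofFn]

def freeNumbers (F : Finset (Fin (N * B))) : Finset (Fin N) :=
  {j | ∀ t : Fin B, bitIndex j t ∉ F}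

theorem le_card_freeNumbers_add_card (F : Finset (Fin (N * B))) :
    N ≤ #(freeNumbers F) + #F := by
  have hsub : (freeNumbers F)ᶜ ⊆ F.image Fin.divNat := by
    intro j hj
    simp only [freeNumbers, mem_compl, mem_filter, mem_univ, true_and, not_forall,
      not_not] at hj
    obtain ⟨t, ht⟩ := hj
    exact mem_image.2 ⟨_, ht, divNat_bitIndex j t⟩
  have := (card_le_card hsub).trans card_image_le
  rw [card_compl, Fintype.card_fin] at this
  omega

variable {F : Finset (Fin (N * B))} {j : Fin N}

theorem numValAt_piecewise_false (val : Fin (N * B) → Bool) (hj : j ∈ freeNumbers F) :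
    numValAt (F.piecewise val fun _ => false) j = 0 := by
  rw [numValAt_eq_zero_iff]
  intro t
  exact F.piecewise_eq_of_notMem _ _ ((mem_filter.1 hj).2 t)

theorem numValAt_piecewise_true_ne_zero (hB : 0 < B) (val : Fin (N * B) → Bool)
    (hj : j ∈ freeNumbers F) : numValAt (F.piecewise val fun _ => true) j ≠ 0 := by
  rw [Ne, numValAt_eq_zero_iff, not_forall]
  exact ⟨⟨0, hB⟩, by simp [F.piecewise_eq_of_notMem _ _ ((mem_filter.1 hj).2 ⟨0, hB⟩)]⟩

theorem exists_medOf_ne_of_le_card_freeNumbers (hB : 0 < B) (val : Fin (N * B) → Bool)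
    (hF : (N + 1) / 2 + 1 ≤ #(freeNumbers F)) :
    ∃ w w' : Fin (N * B) → Bool,
      (∀ i ∈ F, w i = val i) ∧ (∀ i ∈ F, w' i = val i) ∧ medOf w ≠ medOf w' := by
  refine ⟨F.piecewise val fun _ => false, F.piecewise val fun _ => true,
    fun i hi => F.piecewise_eq_of_mem _ _ hi, fun i hi => F.piecewise_eq_of_mem _ _ hi, ?_⟩
  have hfree_le : #(freeNumbers F) ≤ N := card_le_univ _ |>.trans_eq (Fintype.card_fin N)
  have hmed_false : medOf (F.piecewise val fun _ => false) = 0 := by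
    rw [medOf_eq_zero_iff (by omega)]
    have hsub : freeNumbers F ⊆
        ({j | numValAt (F.piecewise val fun _ => false) j = 0} : Finset (Fin N)) :=
      fun j hj => mem_filter.2 ⟨mem_univ j, numValAt_piecewise_false val hj⟩
    have := card_le_card hsub
    omega
  have hmed_true : medOf (F.piecewise val fun _ => true) ≠ 0 := by
    rw [Ne, medOf_eq_zero_iff (by omega)]
    have hsub : ({j | numValAt (F.piecewise val fun _ => true) j = 0} : Finset (Fin N)) ⊆
        (freeNumbers F)ᶜ :=
      fun j hj => mem_compl.2 fun hfree =>
        numValAt_piecewise_true_ne_zero hB val hfree (mem_filter.1 hj).2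
    have := card_le_card hsub
    rw [card_compl, Fintype.card_fin] at this
    omega
  exact hmed_false ▸ hmed_true.symm

end Bits

theorem median_not_fixed_general (B N : ℕ) (hB : 1 ≤ B)
    (F : Finset (Fin (N * B))) (val : Fin (N * B) → Bool) :
    ((N + 1) / 2 + 1 ≤
        (Finset.univ.filter fun j : Fin N => ∀ t : Fin B, bitIndex j t ∉ F).card →
      ∃ w w' : Fin (N * B) → Bool,
        (∀ i ∈ F, w i = val i) ∧ (∀ i ∈ F, w' i = val i) ∧ medOf w ≠ medOf w') ∧
    (F.card + 1 < N / 2 →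
      ∃ w w' : Fin (N * B) → Bool,
        (∀ i ∈ F, w i = val i) ∧ (∀ i ∈ F, w' i = val i) ∧ medOf w ≠ medOf w') := by
  refine ⟨exists_medOf_ne_of_le_card_freeNumbers hB val, fun hF =>
    exists_medOf_ne_of_le_card_freeNumbers hB val ?_⟩
  have := le_card_freeNumbers_add_card F
  omega

/-- If a partial assignment (`F` with values `val`) of the `N·B` input
bits leaves at least `⌈N/2⌉ + 1` of the `N` numbers completely free, then the median is not
constant on the inputs agreeing with the assignment; in particular this holds for any
partial assignment fixing fewer than `⌊N/2⌋ − 1` bits. -/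
theorem median_not_fixed (B N : ℕ) (hB : 1 ≤ B) (hN : 2 ≤ N)
    (F : Finset (Fin (N * B))) (val : Fin (N * B) → Bool) :
    ((N + 1) / 2 + 1 ≤
        (Finset.univ.filter fun j : Fin N => ∀ t : Fin B, bitIndex j t ∉ F).card →
      ∃ w w' : Fin (N * B) → Bool,
        (∀ i ∈ F, w i = val i) ∧ (∀ i ∈ F, w' i = val i) ∧ medOf w ≠ medOf w') ∧
    (F.card + 1 < N / 2 →
      ∃ w w' : Fin (N * B) → Bool,
        (∀ i ∈ F, w i = val i) ∧ (∀ i ∈ F, w' i = val i) ∧ medOf w ≠ medOf w') :=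
  median_not_fixed_general B N hB F val
end

section
/- Let p be a prime, n ≥ 1 with n not divisible by p, and ω ∈ ZMod p a primitive n-th root of unity. For a : Fin n → ZMod p define NTT(a)_k = Σ_{j=0}^{n−1} a_j ω^{jk} and INTT(A)_j = n^{−1} Σ_{k=0}^{n−1} A_k ω^{−jk}. Let ξ_0,…,ξ_{N−1}, η_0,…,η_{N−1} ∈ {0,1} with 2N ≤ n and N < p, set X = Σ_i ξ_i 2^i and Y = Σ_i η_i 2^i, and let a, b : Fin n → ZMod p be ξ and η (cast to ZMod p) padded with zeros. Let c = INTT of the pointwise product (NTT(a)_k · NTT(b)_k)_k. Then for every j, the canonical representative c̃_j ∈ {0,…,p−1} of c_j equals Σ_{i + i' = j, 0 ≤ i,i' < N} ξ_i η_{i'}, and Σ_{j=0}^{n−1} c̃_j · 2^j = X·Y. -/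
/-!
The NTT with respect to a primitive `n`-th root of unity `ω` turns cyclic convolution into
pointwise multiplication, and the transform with `ω⁻¹`, scaled by `n⁻¹`, inverts it by
orthogonality of the characters `k ↦ ω ^ (i * k)`. Hence `c` is the cyclic convolution of the
padded bit vectors. The bits sit in positions `< N` and `2N ≤ n`, so there is no wrap-around
and `c_j` counts the pairs `i + i' = j` with `ξ_i = η_i' = 1`; this count is at most `N < p`,
so it is the canonical representative of `c_j`. Finally `∑_j c̃_j 2^j` is the schoolbook
expansion of `X * Y`.
-/

open Finset

section Transform

variable {R : Type*} [CommRing R] {n : ℕ}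

def dft (ω : R) (v : Fin n → R) (k : Fin n) : R := ∑ j, v j * ω ^ (j.val * k.val)

def cyclicConv (a b : Fin n → R) (j : Fin n) : R :=
  ∑ i, ∑ i', if i + i' = j then a i * b i' else 0

theorem pow_val_add_of_pow_eq_one {ω : R} (hω : ω ^ n = 1) (i i' : Fin n) :
    ω ^ (i + i').val = ω ^ i.val * ω ^ i'.val := by
  rw [Fin.val_add, ← pow_eq_pow_mod _ hω, pow_add]

theorem dft_mul_dft {ω : R} (hω : ω ^ n = 1) (a b : Fin n → R) (k : Fin n) :
    dft ω a k * dft ω b k = dft ω (cyclicConv a b) k := by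
  calc dft ω a k * dft ω b k = ∑ i, ∑ i', a i * b i' * ω ^ ((i + i').val * k.val) := by
        simp only [dft, sum_mul_sum]
        refine sum_congr rfl fun i _ => sum_congr rfl fun i' _ => ?_
        rw [pow_mul _ (i + i').val, pow_val_add_of_pow_eq_one hω, mul_pow, ← pow_mul, ← pow_mul]
        ring
    _ = dft ω (cyclicConv a b) k := by
        simp only [dft, cyclicConv, sum_mul, ite_mul, zero_mul]
        rw [eq_comm, sum_comm]
        refine sum_congr rfl fun i _ => ?_
        rw [sum_comm]
        simp

theorem sum_pow_eq_zero_of_pow_eq_one [NoZeroDivisors R] {x : R} (hx : x ^ n = 1)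
    (hx1 : x ≠ 1) : ∑ k : Fin n, x ^ k.val = 0 := by
  have h := mul_neg_geom_sum x n
  rw [hx, sub_self, mul_eq_zero, sub_eq_zero] at h
  rw [Fin.sum_univ_eq_sum_range (x ^ ·)]
  exact h.resolve_left (Ne.symm hx1)

variable {K : Type*} [Field K] {ω : K}

theorem IsPrimitiveRoot.sum_pow_mul_inv_pow (hω : IsPrimitiveRoot ω n) (i j : Fin n) :
    ∑ k : Fin n, ω ^ (i.val * k.val) * ω⁻¹ ^ (j.val * k.val) = if i = j then (n : K) else 0 := by
  have hω0 : ω ≠ 0 := hω.ne_zero i.pos.ne'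
  simp_rw [pow_mul, ← mul_pow]
  split_ifs with hij
  · subst hij
    simp [mul_inv_cancel₀ (pow_ne_zero _ hω0)]
  · refine sum_pow_eq_zero_of_pow_eq_one ?_ fun h => hij ?_
    · rw [mul_pow, ← pow_mul, ← pow_mul, mul_comm i.val, mul_comm j.val, pow_mul, pow_mul,
        hω.pow_eq_one, inv_pow, hω.pow_eq_one, one_pow, inv_one, one_pow, one_mul]
    · rw [inv_pow, mul_inv_eq_one₀ (pow_ne_zero _ hω0)] at h
      exact Fin.ext (hω.pow_inj i.isLt j.isLt h)

theorem dft_inv_dft (hω : IsPrimitiveRoot ω n) (hn : (n : K) ≠ 0) (v : Fin n → K) (j : Fin n) :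
    (n : K)⁻¹ * dft ω⁻¹ (dft ω v) j = v j := by
  have h : dft ω⁻¹ (dft ω v) j = v j * n := by
    simp only [dft, sum_mul, mul_assoc]
    simp_rw [mul_comm _ j.val]
    rw [sum_comm]
    simp_rw [← mul_sum, hω.sum_pow_mul_inv_pow]
    simp
  rw [h, mul_comm, mul_assoc, mul_inv_cancel₀ hn, mul_one]

end Transform

section Bits

variable {R : Type*} [CommRing R] {n N : ℕ}

theorem Fin.sum_castLE_of_eq_zero {M : Type*} [AddCommMonoid M] (h : N ≤ n)
    (f : Fin n → M) (hf : ∀ j : Fin n, N ≤ j.val → f j = 0) :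
    ∑ i : Fin N, f (Fin.castLE h i) = ∑ j, f j :=
  Fintype.sum_of_injective _ (Fin.castLE_injective h) _ _
    (fun j hj => hf j (by simpa [Fin.range_castLE] using hj)) fun _ => rfl

def padBits (ξ : Fin N → Bool) (j : Fin n) : R :=
  if h : j.val < N then (if ξ ⟨j.val, h⟩ then 1 else 0) else 0

theorem padBits_castLE (h : N ≤ n) (ξ : Fin N → Bool) (i : Fin N) :
    (padBits ξ (Fin.castLE h i) : R) = if ξ i then 1 else 0 := by
  simp [padBits]

theorem padBits_of_le (ξ : Fin N → Bool) {j : Fin n} (hj : N ≤ j.val) :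
    (padBits ξ j : R) = 0 :=
  dif_neg (by omega)

def convCount (ξ η : Fin N → Bool) (j : ℕ) : ℕ :=
  ∑ i : Fin N, ∑ i' : Fin N, if i.val + i'.val = j ∧ ξ i = true ∧ η i' = true then 1 else 0

theorem cyclicConv_padBits (h : 2 * N ≤ n) (ξ η : Fin N → Bool) (j : Fin n) :
    cyclicConv (padBits ξ) (padBits η) j = (convCount ξ η j.val : R) := by
  have hN : N ≤ n := by omega
  simp only [cyclicConv, convCount]
  rw [← Fin.sum_castLE_of_eq_zero hN _ fun i hi => by simp [padBits_of_le ξ hi]]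
  push_cast
  refine sum_congr rfl fun i _ => ?_
  rw [← Fin.sum_castLE_of_eq_zero hN _ fun i' hi' => by simp [padBits_of_le η hi']]
  refine sum_congr rfl fun i' _ => ?_
  have hadd : Fin.castLE hN i + Fin.castLE hN i' = j ↔ i.val + i'.val = j.val := by
    rw [Fin.ext_iff, Fin.val_add, Fin.val_castLE, Fin.val_castLE, Nat.mod_eq_of_lt (by omega)]
  simp only [hadd, padBits_castLE, ite_zero_mul_ite_zero, mul_one, ← ite_and]

theorem convCount_le (ξ η : Fin N → Bool) (j : ℕ) : convCount ξ η j ≤ N := by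
  calc convCount ξ η j ≤ ∑ _i : Fin N, 1 := by
        refine sum_le_sum fun i _ => ?_
        rw [sum_boole]
        refine card_le_one.2 fun i₁ hi₁ i₂ hi₂ => Fin.ext ?_
        simp only [mem_filter] at hi₁ hi₂
        omega
    _ = N := by simp

theorem sum_convCount_mul_two_pow (h : 2 * N ≤ n) (ξ η : Fin N → Bool) :
    ∑ j : Fin n, convCount ξ η j.val * 2 ^ j.val =
      (∑ i : Fin N, if ξ i then 2 ^ i.val else 0) *
        (∑ i : Fin N, if η i then 2 ^ i.val else 0) := by
  calc ∑ j : Fin n, convCount ξ η j.val * 2 ^ j.val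
      = ∑ i : Fin N, ∑ i' : Fin N,
          if ξ i = true ∧ η i' = true then 2 ^ (i.val + i'.val) else 0 := by
        simp only [convCount, sum_mul, boole_mul]
        rw [sum_comm]
        refine sum_congr rfl fun i _ => ?_
        rw [sum_comm]
        refine sum_congr rfl fun i' _ => ?_
        rw [Fin.sum_univ_eq_sum_range
          (fun m => if i.val + i'.val = m ∧ ξ i = true ∧ η i' = true then 2 ^ m else 0)]
        by_cases hb : ξ i = true ∧ η i' = true
        · simp only [hb, and_true, if_true]
          rw [sum_ite_eq, if_pos (mem_range.2 (by omega))]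
        · rw [if_neg hb]
          exact sum_eq_zero fun m _ => if_neg fun hm => hb hm.2
    _ = _ := by
        rw [sum_mul_sum]
        simp_rw [ite_zero_mul_ite_zero, pow_add]

end Bits

/-- **Correctness of NTT-based multiplication.** Let `p` be prime, `n ≥ 1`
not divisible by `p`, and `ω` a primitive `n`-th root of unity in `ZMod p`. Given the bit
vectors `ξ`, `η` of two `N`-bit integers with `2N ≤ n` and `N < p`, padded to vectors
`a`, `b` of length `n`, the inverse NTT of the pointwise product of their NTTs is the
convolution `c`, with `c̃_j = Σ_{i+i'=j} ξ_i η_{i'}` and `Σ_j c̃_j 2^j = X·Y`. -/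
theorem ntt_multiplication_correct
    (p n : ℕ) [Fact p.Prime] (hn : 1 ≤ n) (hpn : ¬ p ∣ n)
    (ω : ZMod p) (hω : ω ^ n = 1) (hprim : ∀ k : ℕ, 1 ≤ k → k < n → ω ^ k ≠ 1)
    (N : ℕ) (ξ η : Fin N → Bool) (h2N : 2 * N ≤ n) (hNp : N < p)
    (a b : Fin n → ZMod p)
    (ha : ∀ j : Fin n, a j = if h : j.val < N then (if ξ ⟨j.val, h⟩ then 1 else 0) else 0)
    (hb : ∀ j : Fin n, b j = if h : j.val < N then (if η ⟨j.val, h⟩ then 1 else 0) else 0)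
    (NTT INTT : (Fin n → ZMod p) → Fin n → ZMod p)
    (hNTT : ∀ (v : Fin n → ZMod p) (k : Fin n),
      NTT v k = ∑ j : Fin n, v j * ω ^ (j.val * k.val))
    (hINTT : ∀ (A : Fin n → ZMod p) (j : Fin n),
      INTT A j = (n : ZMod p)⁻¹ * ∑ k : Fin n, A k * ω⁻¹ ^ (j.val * k.val))
    (c : Fin n → ZMod p)
    (hc : ∀ j : Fin n, c j = INTT (fun k => NTT a k * NTT b k) j) :
    (∀ j : Fin n, (c j).val =
      ∑ i : Fin N, ∑ i' : Fin N,
        if i.val + i'.val = j.val ∧ ξ i = true ∧ η i' = true then 1 else 0) ∧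
    (∑ j : Fin n, (c j).val * 2 ^ j.val) =
      (∑ i : Fin N, if ξ i then 2 ^ i.val else 0) *
        (∑ i : Fin N, if η i then 2 ^ i.val else 0) := by
  have hroot : IsPrimitiveRoot ω n := .mk_of_lt ω hn hω hprim
  have hn0 : (n : ZMod p) ≠ 0 := by rwa [Ne, ZMod.natCast_eq_zero_iff]
  have hNTT' : ∀ v, NTT v = dft ω v := fun v => funext (hNTT v)
  have hINTT' : ∀ A j, INTT A j = (n : ZMod p)⁻¹ * dft ω⁻¹ A j := by
    intro A j
    simp_rw [hINTT, dft, mul_comm _ j.val]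
  have hcount : ∀ j, c j = convCount ξ η j.val := by
    intro j
    rw [hc, hINTT', hNTT', hNTT', funext (dft_mul_dft hω a b), dft_inv_dft hroot hn0,
      funext ha, funext hb]
    exact cyclicConv_padBits h2N ξ η j
  have hval : ∀ j, (c j).val = convCount ξ η j.val := fun j => by
    rw [hcount, ZMod.val_natCast_of_lt ((convCount_le ξ η j.val).trans_lt hNp)]
  refine ⟨hval, ?_⟩
  simp_rw [hval]
  exact sum_convCount_mul_two_pow h2N ξ η
end
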